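/- arXiv:1008.3863 — 4 statements merged into one kernel-verified Lean document; each statement's English description precedes it below -/
import Mathlib

section
/- Let D be a qualification domain, Σ a signature, and P a QLP(D) program. The operator T_P is continuous: for every chain {Iₙ | n ∈ ℕ} ⊆ Int_D with Iₙ ⊆ Iₙ₊₁ for all n, one has T_P(⋃ₙ Iₙ) = ⋃ₙ T_P(Iₙ). -/
/-- A qualification domain: a lattice with least element `⊥`, greatest element `⊤`,
and an attenuation operation `att` that is associative, commutative, monotone,
satisfies `att d ⊤ = d`, `att d ⊥ = ⊥`, `att d e < e` for `d, e ∉ {⊥, ⊤}`, and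
distributes over binary meets. -/
class QualDomain (D : Type*) extends Lattice D, BoundedOrder D where
  att : D → D → D
  att_assoc : ∀ a b c : D, att (att a b) c = att a (att b c)
  att_comm : ∀ a b : D, att a b = att b a
  att_mono : ∀ a b c d : D, a ≤ b → c ≤ d → att a c ≤ att b d
  att_top : ∀ a : D, att a ⊤ = a
  att_bot : ∀ a : D, att a ⊥ = ⊥
  att_lt : ∀ a b : D, a ≠ ⊥ → a ≠ ⊤ → b ≠ ⊥ → b ≠ ⊤ → att a b < b
  att_inf : ∀ a b c : D, att a (b ⊓ c) = att a b ⊓ att a c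

/-- A signature: constructor (function) symbols and predicate symbols with arities. -/
structure Signature where
  Func : Type
  Pred : Type
  fArity : Func → ℕ
  pArity : Pred → ℕ

/-- Terms over a signature, with variables drawn from `ℕ`. -/
inductive Term (Sg : Signature) : Type
  | var : ℕ → Term Sg
  | app : (f : Sg.Func) → (Fin (Sg.fArity f) → Term Sg) → Term Sg

/-- Atoms `p(t₁, …, tₙ)` over a signature. -/
structure Atom (Sg : Signature) : Type where
  pred : Sg.Pred
  args : Fin (Sg.pArity pred) → Term Sg

/-- Substitutions of terms for variables. -/
abbrev Subst (Sg : Signature) := ℕ → Term Sg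

/-- Applying a substitution to a term. -/
def Term.applySubst {Sg : Signature} : Term Sg → Subst Sg → Term Sg
  | .var v, θ => θ v
  | .app f a, θ => .app f (fun i => (a i).applySubst θ)

/-- Applying a substitution to an atom. -/
def Atom.applySubst {Sg : Signature} (A : Atom Sg) (θ : Subst Sg) : Atom Sg :=
  ⟨A.pred, fun i => (A.args i).applySubst θ⟩

/-- A `D`-annotated atom `A#d` is a pair of an atom and a qualification value. -/
abbrev AnnAtom (Sg : Signature) (D : Type*) := Atom Sg × D

/-- The `D`-entailment relation: `A#d ⊨ A'#d'` iff `A' = Aθ` for some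
substitution `θ` and `d' ⊑ d`. -/
def Entails {Sg : Signature} {D : Type*} [QualDomain D]
    (x y : AnnAtom Sg D) : Prop :=
  ∃ θ : Subst Sg, y.1 = x.1.applySubst θ ∧ y.2 ≤ x.2

/-- The annotated Herbrand base `At_Σ(D)`: all annotated atoms `A#d` with `d ≠ ⊥`. -/
def HerbrandBase (Sg : Signature) (D : Type*) [QualDomain D] :
    Set (AnnAtom Sg D) := {x | x.2 ≠ ⊥}

/-- An open Herbrand interpretation over `D`: a subset of the annotated Herbrand
base closed under `D`-entailment. -/
def IsInterp {Sg : Signature} {D : Type*} [QualDomain D]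
    (I : Set (AnnAtom Sg D)) : Prop :=
  I ⊆ HerbrandBase Sg D ∧
  ∀ x ∈ I, ∀ y ∈ HerbrandBase Sg D, Entails x y → y ∈ I

/-- A qualified definite Horn clause `A ←d B₁,…,Bₖ`. -/
structure Clause (Sg : Signature) (D : Type*) where
  head : Atom Sg
  d : D
  body : List (Atom Sg)

/-- The immediate-consequences operator `T_P`. -/
def TP {Sg : Signature} {D : Type*} [QualDomain D]
    (P : Set (Clause Sg D)) (I : Set (AnnAtom Sg D)) : Set (AnnAtom Sg D) :=
  { x | ∃ C ∈ P, ∃ θ : Subst Sg, ∃ ds : Fin C.body.length → D,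
      (∀ i, ds i ≠ ⊥) ∧
      (∀ i, ((C.body.get i).applySubst θ, ds i) ∈ I) ∧
      x.1 = C.head.applySubst θ ∧ x.2 ≠ ⊥ ∧
      x.2 ≤ QualDomain.att C.d (Finset.univ.inf ds) }

/-- `I` is a model of a clause `A ←d B₁,…,Bₖ`. -/
def ModelsClause {Sg : Signature} {D : Type*} [QualDomain D]
    (I : Set (AnnAtom Sg D)) (C : Clause Sg D) : Prop :=
  ∀ (θ : Subst Sg) (ds : Fin C.body.length → D),
    (∀ i, ds i ≠ ⊥) →
    (∀ i, ((C.body.get i).applySubst θ, ds i) ∈ I) →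
    (C.head.applySubst θ, QualDomain.att C.d (Finset.univ.inf ds)) ∈ I

/-- `I` is a model of the program `P`. -/
def Models {Sg : Signature} {D : Type*} [QualDomain D]
    (I : Set (AnnAtom Sg D)) (P : Set (Clause Sg D)) : Prop :=
  ∀ C ∈ P, ModelsClause I C

/-- Iterates `T_P↑ⁿ(∅)` of the operator `T_P` starting from the empty set. -/
def TPiter {Sg : Signature} {D : Type*} [QualDomain D]
    (P : Set (Clause Sg D)) : ℕ → Set (AnnAtom Sg D)
  | 0 => ∅
  | n + 1 => TP P (TPiter P n)

/-- Derivability in the calculus `QHL(D)` via the single rule `QMP(D)`. -/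
inductive Derives {Sg : Signature} {D : Type*} [QualDomain D]
    (P : Set (Clause Sg D)) : AnnAtom Sg D → Prop
  | qmp (C : Clause Sg D) (hC : C ∈ P) (θ : Subst Sg)
      (ds : Fin C.body.length → D)
      (hds : ∀ i, ds i ≠ ⊥)
      (hbody : ∀ i, Derives P ((C.body.get i).applySubst θ, ds i))
      (d' : D) (hd' : d' ≠ ⊥)
      (hle : d' ≤ QualDomain.att C.d (Finset.univ.inf ds)) :
      Derives P (C.head.applySubst θ, d')

/-- Derivability in `QHL(D)` using exactly `n` inference steps. -/
inductive DerivesN {Sg : Signature} {D : Type*} [QualDomain D]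
    (P : Set (Clause Sg D)) : ℕ → AnnAtom Sg D → Prop
  | qmp (C : Clause Sg D) (hC : C ∈ P) (θ : Subst Sg)
      (ds : Fin C.body.length → D) (ns : Fin C.body.length → ℕ)
      (hds : ∀ i, ds i ≠ ⊥)
      (hbody : ∀ i, DerivesN P (ns i) ((C.body.get i).applySubst θ, ds i))
      (d' : D) (hd' : d' ≠ ⊥)
      (hle : d' ≤ QualDomain.att C.d (Finset.univ.inf ds)) :
      DerivesN P (Finset.univ.sum ns + 1) (C.head.applySubst θ, d')

/-! Each element of `T_P(⋃ₙ Iₙ)` is justified by a single clause instance whose body has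
finitely many atoms; each of them lies in some `Iₙ`, and since the family is directed they
all lie in one common `Iₙ`, so the element is already in `T_P(Iₙ)`. The other inclusion is
monotonicity of `T_P`. -/

section TP

variable {Sg : Signature} {D : Type*} [QualDomain D] (P : Set (Clause Sg D))

theorem TP_mono {I J : Set (AnnAtom Sg D)} (hIJ : I ⊆ J) : TP P I ⊆ TP P J := by
  rintro x ⟨C, hC, θ, ds, hds, hbody, hhead, hx, hle⟩
  exact ⟨C, hC, θ, ds, hds, fun i => hIJ (hbody i), hhead, hx, hle⟩

theorem TP_iUnion_of_directed {ι : Sort*} [Nonempty ι] {Is : ι → Set (AnnAtom Sg D)}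
    (hdir : Directed (· ⊆ ·) Is) : TP P (⋃ n, Is n) = ⋃ n, TP P (Is n) := by
  refine subset_antisymm ?_ (Set.iUnion_subset fun n => TP_mono P (Set.subset_iUnion Is n))
  rintro x ⟨C, hC, θ, ds, hds, hbody, hhead, hx, hle⟩
  choose stage hstage using fun i => Set.mem_iUnion.mp (hbody i)
  obtain ⟨n, hn⟩ := hdir.finite_le stage
  exact Set.mem_iUnion.mpr ⟨n, C, hC, θ, ds, hds, fun i => hn i (hstage i), hhead, hx, hle⟩

end TP

theorem TP_continuous_general {Sg : Signature} {D : Type*} [QualDomain D]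
    (P : Set (Clause Sg D))
    (Is : ℕ → Set (AnnAtom Sg D))
    (hchain : ∀ n, Is n ⊆ Is (n + 1)) :
    TP P (⋃ n, Is n) = ⋃ n, TP P (Is n) :=
  TP_iUnion_of_directed P (monotone_nat_of_le_succ hchain).directed_le

/-- The operator `T_P` is continuous: for every chain `{Iₙ | n ∈ ℕ}` of
interpretations with `Iₙ ⊆ Iₙ₊₁` for all `n`, one has
`T_P(⋃ₙ Iₙ) = ⋃ₙ T_P(Iₙ)`. -/
theorem TP_continuous {Sg : Signature} {D : Type*} [QualDomain D]
    (P : Set (Clause Sg D)) (hP : ∀ C ∈ P, C.d ≠ ⊥)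
    (Is : ℕ → Set (AnnAtom Sg D)) (hIs : ∀ n, IsInterp (Is n))
    (hchain : ∀ n, Is n ⊆ Is (n + 1)) :
    TP P (⋃ n, Is n) = ⋃ n, TP P (Is n) :=
  TP_continuous_general P Is hchain
end

section
/- Let D be a qualification domain, Σ a signature, and P a QLP(D) program, and let M_P denote the least Herbrand model of P (the least fixpoint of T_P). Then M_P = { A#d | P ⊢_{QHL(D)} A#d }, i.e., an annotated atom belongs to the least Herbrand model if and only if it is derivable from the clauses of P by finitely many applications of the inference rule QMP(D). -/
/-!
The derivable atoms form an interpretation (derivations can be instantiated and their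
qualification lowered) which is a fixpoint of `T_P`, since one `QMP(D)` step is exactly one
application of `T_P`; so they contain `M_P`. Conversely, every prefixed point of `T_P`
contains all derivable atoms, by induction on derivations.
-/

def Subst.comp {Sg : Signature} (σ τ : Subst Sg) : Subst Sg :=
  fun v => (σ v).applySubst τ

theorem Term.applySubst_applySubst {Sg : Signature} (t : Term Sg) (σ τ : Subst Sg) :
    (t.applySubst σ).applySubst τ = t.applySubst (σ.comp τ) := by
  induction t with
  | var v => rfl
  | app f a ih => simp only [Term.applySubst, ih]

theorem Atom.applySubst_applySubst {Sg : Signature} (A : Atom Sg) (σ τ : Subst Sg) :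
    (A.applySubst σ).applySubst τ = A.applySubst (σ.comp τ) := by
  simp only [Atom.applySubst, Term.applySubst_applySubst]

namespace Derives

variable {Sg : Signature} {D : Type*} [QualDomain D] {P : Set (Clause Sg D)}

theorem ne_bot {x : AnnAtom Sg D} (h : Derives P x) : x.2 ≠ ⊥ := by
  cases h with
  | qmp _ _ _ _ _ _ _ hd' _ => exact hd'

theorem instantiate {x : AnnAtom Sg D} (h : Derives P x) (τ : Subst Sg) {d : D}
    (hd : d ≠ ⊥) (hle : d ≤ x.2) : Derives P (x.1.applySubst τ, d) := by
  induction h generalizing τ d with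
  | qmp C hC θ ds hds _ _ _ hle' ih =>
    rw [Atom.applySubst_applySubst]
    refine .qmp C hC (θ.comp τ) ds hds (fun i => ?_) d hd (hle.trans hle')
    simpa only [Atom.applySubst_applySubst] using ih i τ (hds i) le_rfl

theorem of_entails {x y : AnnAtom Sg D} (hx : Derives P x) (hy : y.2 ≠ ⊥)
    (hxy : Entails x y) : Derives P y := by
  obtain ⟨τ, hy₁, hy₂⟩ := hxy
  simpa only [← hy₁] using hx.instantiate τ hy hy₂

end Derives

section LeastModel

variable {Sg : Signature} {D : Type*} [QualDomain D] (P : Set (Clause Sg D))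

theorem isInterp_setOf_derives : IsInterp {x : AnnAtom Sg D | Derives P x} :=
  ⟨fun _ hx => Derives.ne_bot hx, fun _ hx _ hy hxy => Derives.of_entails hx hy hxy⟩

theorem TP_setOf_derives : TP P {x | Derives P x} = {x | Derives P x} := by
  ext ⟨A, d⟩
  constructor
  · rintro ⟨C, hC, θ, ds, hds, hbody, rfl, hd, hle⟩
    exact .qmp C hC θ ds hds hbody d hd hle
  · rintro (⟨C, hC, θ, ds, hds, hbody, d, hd, hle⟩ : Derives P _)
    exact ⟨C, hC, θ, ds, hds, hbody, rfl, hd, hle⟩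

theorem setOf_derives_subset_of_TP_subset {I : Set (AnnAtom Sg D)} (hI : TP P I ⊆ I) :
    {x | Derives P x} ⊆ I := by
  intro x hx
  induction hx with
  | qmp C hC θ ds hds _ d hd hle ih => exact hI ⟨C, hC, θ, ds, hds, ih, rfl, hd, hle⟩

end LeastModel

theorem least_model_eq_derivable_general {Sg : Signature} {D : Type*} [QualDomain D]
    (P : Set (Clause Sg D))
    (M : Set (AnnAtom Sg D)) (hfix : TP P M = M)
    (hleast : ∀ I : Set (AnnAtom Sg D), IsInterp I → TP P I = I → M ⊆ I) :
    M = { x : AnnAtom Sg D | Derives P x } :=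
  (hleast _ (isInterp_setOf_derives P) (TP_setOf_derives P)).antisymm
    (setOf_derives_subset_of_TP_subset P hfix.subset)

/-- The least Herbrand model `M_P` of `P` (i.e. the least fixpoint of `T_P` in
`Int_D`) consists exactly of the annotated atoms derivable from the clauses of
`P` in the calculus `QHL(D)` by finitely many applications of `QMP(D)`. -/
theorem least_model_eq_derivable {Sg : Signature} {D : Type*} [QualDomain D]
    (P : Set (Clause Sg D)) (hP : ∀ C ∈ P, C.d ≠ ⊥)
    (M : Set (AnnAtom Sg D)) (hM : IsInterp M) (hfix : TP P M = M)
    (hleast : ∀ I : Set (AnnAtom Sg D), IsInterp I → TP P I = I → M ⊆ I) :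
    M = { x : AnnAtom Sg D | Derives P x } :=
  least_model_eq_derivable_general P M hfix hleast
end

section
/- Let D be a qualification domain, Σ a signature, and P a QLP(D) program. For every n ∈ ℕ and every annotated atom A#d: if P ⊢ⁿ_{QHL(D)} A#d (derivable in exactly n inference steps), then there exists m ∈ ℕ with A#d ∈ T_P↑^m(∅). -/
theorem TP_monotone {Sg : Signature} {D : Type*} [QualDomain D]
    (P : Set (Clause Sg D)) : Monotone (TP P) := by
  rintro I J hIJ x ⟨C, hC, θ, ds, hds, hbody, hx⟩
  exact ⟨C, hC, θ, ds, hds, fun i => hIJ (hbody i), hx⟩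

theorem TPiter_monotone {Sg : Signature} {D : Type*} [QualDomain D]
    (P : Set (Clause Sg D)) : Monotone (TPiter P) := by
  refine monotone_nat_of_le_succ fun m => ?_
  induction m with
  | zero => exact Set.empty_subset _
  | succ k ih => exact TP_monotone P ih

theorem derivesN_imp_iter_general {Sg : Signature} {D : Type*} [QualDomain D]
    (P : Set (Clause Sg D))
    (n : ℕ) (x : AnnAtom Sg D) (h : DerivesN P n x) :
    ∃ m : ℕ, x ∈ TPiter P m := by
  induction h with
  | qmp C hC θ ds _ hds _ d' hd' hle ih =>
    choose ms hms using ih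
    have hpremises : ∀ i, ((C.body.get i).applySubst θ, ds i) ∈ TPiter P (Finset.univ.sup ms) :=
      fun i => TPiter_monotone P (Finset.le_sup (Finset.mem_univ i)) (hms i)
    exact ⟨Finset.univ.sup ms + 1, C, hC, θ, ds, hds, hpremises, rfl, hd', hle⟩

/-- If an annotated atom `A#d` is derivable in `QHL(D)` from `P` using exactly
`n` inference steps, then `A#d ∈ T_P↑^m(∅)` for some `m ∈ ℕ`. -/
theorem derivesN_imp_iter {Sg : Signature} {D : Type*} [QualDomain D]
    (P : Set (Clause Sg D)) (hP : ∀ C ∈ P, C.d ≠ ⊥)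
    (n : ℕ) (x : AnnAtom Sg D) (h : DerivesN P n x) :
    ∃ m : ℕ, x ∈ TPiter P m :=
  derivesN_imp_iter_general P n x h
end

section
/- Let D be a qualification domain, Σ a signature, and P a QLP(D) program. For every n ∈ ℕ and every annotated atom A#d: if A#d ∈ T_P↑ⁿ(∅), then there exists m ∈ ℕ with P ⊢^m_{QHL(D)} A#d (derivable in exactly m inference steps). -/
section

variable {Sg : Signature} {D : Type*} [QualDomain D]

theorem TP_mono_s14 (P : Set (Clause Sg D)) : Monotone (TP P) := by
  rintro I J hIJ x ⟨C, hC, θ, ds, hds, hbody, hhead, hx, hle⟩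
  exact ⟨C, hC, θ, ds, hds, fun i => hIJ (hbody i), hhead, hx, hle⟩

theorem TPiter_subset_of_TP_subset {P : Set (Clause Sg D)} {S : Set (AnnAtom Sg D)}
    (hS : TP P S ⊆ S) : ∀ n, TPiter P n ⊆ S
  | 0 => Set.empty_subset S
  | n + 1 => (TP_mono_s14 P (TPiter_subset_of_TP_subset hS n)).trans hS

def DerivableSet (P : Set (Clause Sg D)) : Set (AnnAtom Sg D) :=
  {x | ∃ m, DerivesN P m x}

theorem TP_derivableSet_subset (P : Set (Clause Sg D)) :
    TP P (DerivableSet P) ⊆ DerivableSet P := by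
  rintro ⟨A, d⟩ ⟨C, hC, θ, ds, hds, hbody, rfl, hd, hle⟩
  choose ns hns using hbody
  exact ⟨_, .qmp C hC θ ds ns hds hns d hd hle⟩

end

theorem iter_imp_derivesN_general {Sg : Signature} {D : Type*} [QualDomain D]
    (P : Set (Clause Sg D))
    (n : ℕ) (x : AnnAtom Sg D) (h : x ∈ TPiter P n) :
    ∃ m : ℕ, DerivesN P m x :=
  TPiter_subset_of_TP_subset (TP_derivableSet_subset P) n h

/-- If an annotated atom `A#d` belongs to the iterate `T_P↑ⁿ(∅)`, then it is
derivable in `QHL(D)` from `P` using exactly `m` inference steps for some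
`m ∈ ℕ`. -/
theorem iter_imp_derivesN {Sg : Signature} {D : Type*} [QualDomain D]
    (P : Set (Clause Sg D)) (hP : ∀ C ∈ P, C.d ≠ ⊥)
    (n : ℕ) (x : AnnAtom Sg D) (h : x ∈ TPiter P n) :
    ∃ m : ℕ, DerivesN P m x :=
  iter_imp_derivesN_general P n x h
end
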